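/- arXiv:1403.6982 — 10 statements merged into one kernel-verified Lean document; each statement's English description precedes it below -/
import Mathlib

section
/- Fix reals a > b > 0, w1 > 0 and λ > 0, define u1(x) = (w1/(2·ln 2)) · (a/(1 + a·x) − b/(1 + b·x)) − λ, set δ = 1/b − 1/a and β = (1/2)·√(δ·(δ + 2·w1/(λ·ln 2))) − (1/2)·(1/b + 1/a). Then β > −1/a (so 1 + a·β > 0 and 1 + b·β > 0), u1(β) = 0, and u1(x) < 0 for every x > β; moreover if u1(0) ≥ 0 then β ≥ 0. -/
/-!
Since `a / (1 + a x) = 1 / (x + 1/a)`, the function `u1` is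
`c ((x + p)⁻¹ - (x + q)⁻¹) - λ = c (q - p) / ((x + p)(x + q)) - λ`
with `p = 1/a < q = 1/b` and `c = w1 / (2 ln 2)`. To the right of both poles its sign is that of
`c (q - p) / λ - (x + p)(x + q)`, and the product `(x + p)(x + q)` is strictly increasing there,
so the largest zero of `u1` is the larger root of the quadratic `(x + p)(x + q) = c (q - p) / λ`,
which is the closed form `β`.
-/

open Real

noncomputable def upperRoot (p q k : ℝ) : ℝ := (√((q - p) ^ 2 + 4 * k) - (p + q)) / 2

lemma upperRoot_add_mul_add {p q k : ℝ} (hk : 0 ≤ k) :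
    (upperRoot p q k + p) * (upperRoot p q k + q) = k := by
  have hs := sq_sqrt (show 0 ≤ (q - p) ^ 2 + 4 * k by positivity)
  unfold upperRoot
  linear_combination hs / 4

lemma lt_sqrt_sq_add_mul_of_pos {d k : ℝ} (hk : 0 < k) : d < √(d ^ 2 + 4 * k) := by
  have hs := sq_sqrt (show 0 ≤ d ^ 2 + 4 * k by positivity)
  nlinarith [sqrt_nonneg (d ^ 2 + 4 * k)]

lemma upperRoot_add_left_pos {p q k : ℝ} (hk : 0 < k) : 0 < upperRoot p q k + p := by
  have := lt_sqrt_sq_add_mul_of_pos (d := q - p) hk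
  unfold upperRoot
  linarith

lemma upperRoot_add_right_pos {p q k : ℝ} (hk : 0 < k) : 0 < upperRoot p q k + q := by
  have := lt_sqrt_sq_add_mul_of_pos (d := p - q) hk
  unfold upperRoot
  rw [show (q - p) ^ 2 = (p - q) ^ 2 by ring]
  linarith

lemma add_mul_add_lt_add_mul_add {p q r x : ℝ} (hp : 0 < r + p) (hq : 0 < r + q) (hrx : r < x) :
    (r + p) * (r + q) < (x + p) * (x + q) := by
  nlinarith

lemma div_one_add_mul_eq_inv_add_inv {a : ℝ} (ha : a ≠ 0) (x : ℝ) :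
    a / (1 + a * x) = (x + a⁻¹)⁻¹ := by
  rw [show x + a⁻¹ = (1 + a * x) / a by field_simp; ring, inv_div]

section InvSubInv

variable {c lam p q x : ℝ}

lemma mul_inv_add_sub_inv_add_sub (hlam : lam ≠ 0) (hp : x + p ≠ 0) (hq : x + q ≠ 0) :
    c * ((x + p)⁻¹ - (x + q)⁻¹) - lam =
      lam * (c * (q - p) / lam - (x + p) * (x + q)) / ((x + p) * (x + q)) := by
  field_simp
  ring

lemma mul_inv_add_sub_inv_add_sub_eq_zero_iff (hlam : 0 < lam) (hp : 0 < x + p)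
    (hq : 0 < x + q) :
    c * ((x + p)⁻¹ - (x + q)⁻¹) - lam = 0 ↔ (x + p) * (x + q) = c * (q - p) / lam := by
  rw [mul_inv_add_sub_inv_add_sub hlam.ne' hp.ne' hq.ne', div_eq_zero_iff, mul_eq_zero,
    sub_eq_zero, or_iff_right hlam.ne', or_iff_left (mul_pos hp hq).ne', eq_comm]

lemma mul_inv_add_sub_inv_add_sub_neg_iff (hlam : 0 < lam) (hp : 0 < x + p)
    (hq : 0 < x + q) :
    c * ((x + p)⁻¹ - (x + q)⁻¹) - lam < 0 ↔ c * (q - p) / lam < (x + p) * (x + q) := by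
  rw [mul_inv_add_sub_inv_add_sub hlam.ne' hp.ne' hq.ne',
    div_lt_iff₀ (mul_pos hp hq), zero_mul, ← mul_zero lam, mul_lt_mul_iff_of_pos_left hlam,
    sub_neg]

lemma mul_inv_add_sub_inv_add_sub_nonneg_iff (hlam : 0 < lam) (hp : 0 < x + p)
    (hq : 0 < x + q) :
    0 ≤ c * ((x + p)⁻¹ - (x + q)⁻¹) - lam ↔ (x + p) * (x + q) ≤ c * (q - p) / lam := by
  rw [← not_lt, mul_inv_add_sub_inv_add_sub_neg_iff hlam hp hq, not_lt]

end InvSubInv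

/-- `β` is the largest root of the confidential-message marginal utility `u1`:
`β > −1/a` (hence `1 + a·β > 0` and `1 + b·β > 0`), `u1 β = 0`, `u1 x < 0`
for `x > β`, and if `u1 0 ≥ 0` then `β ≥ 0`. -/
theorem beta_largest_root (a b w1 lam : ℝ) (hb : 0 < b) (hba : b < a)
    (hw1 : 0 < w1) (hlam : 0 < lam) :
    let u1 : ℝ → ℝ := fun x =>
      w1 / (2 * Real.log 2) * (a / (1 + a * x) - b / (1 + b * x)) - lam
    let δ : ℝ := 1 / b - 1 / a
    let β : ℝ := (1 / 2) * Real.sqrt (δ * (δ + 2 * w1 / (lam * Real.log 2))) -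
      (1 / 2) * (1 / b + 1 / a)
    β > -(1 / a) ∧ 1 + a * β > 0 ∧ 1 + b * β > 0 ∧ u1 β = 0 ∧
      (∀ x : ℝ, β < x → u1 x < 0) ∧ (0 ≤ u1 0 → 0 ≤ β) := by
  intro u1 δ β
  have ha : 0 < a := hb.trans hba
  set c := w1 / (2 * log 2)
  set k := c * (b⁻¹ - a⁻¹) / lam
  have hu : ∀ x, u1 x = c * ((x + a⁻¹)⁻¹ - (x + b⁻¹)⁻¹) - lam := fun x => by
    simp only [u1, c, div_one_add_mul_eq_inv_add_inv ha.ne', div_one_add_mul_eq_inv_add_inv hb.ne']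
  have hk : 0 < k := by
    have : a⁻¹ < b⁻¹ := inv_strictAnti₀ hb hba
    positivity
  have hβ : β = upperRoot a⁻¹ b⁻¹ k := by
    simp only [β, δ, k, c, upperRoot, one_div]
    ring_nf
  have hpos_a := upperRoot_add_left_pos (p := a⁻¹) (q := b⁻¹) hk
  have hpos_b := upperRoot_add_right_pos (p := a⁻¹) (q := b⁻¹) hk
  have hroot := upperRoot_add_mul_add (p := a⁻¹) (q := b⁻¹) hk.le
  rw [hβ]
  set r := upperRoot a⁻¹ b⁻¹ k
  refine ⟨by rwa [one_div, gt_iff_lt, neg_lt_iff_pos_add], ?_, ?_, ?_, ?_, ?_⟩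
  · simpa [mul_add, ha.ne', add_comm] using mul_pos ha hpos_a
  · simpa [mul_add, hb.ne', add_comm] using mul_pos hb hpos_b
  · rw [hu, mul_inv_add_sub_inv_add_sub_eq_zero_iff hlam hpos_a hpos_b]
    exact hroot
  · intro x hx
    rw [hu, mul_inv_add_sub_inv_add_sub_neg_iff hlam (by linarith) (by linarith)]
    exact hroot.symm.trans_lt (add_mul_add_lt_add_mul_add hpos_a hpos_b hx)
  · intro h0
    rw [hu, mul_inv_add_sub_inv_add_sub_nonneg_iff hlam (by simpa) (by simpa)] at h0
    by_contra! hr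
    exact (add_mul_add_lt_add_mul_add hpos_a hpos_b hr).not_ge (h0.trans_eq hroot.symm)
end

section
/- Fix reals a > b > 0, w1 > w0 > 0 and λ > 0. Define u0(x) = (w0/(2·ln 2)) · a/(1 + a·x) − λ and u1(x) = (w1/(2·ln 2)) · (a/(1 + a·x) − b/(1 + b·x)) − λ, set δ = 1/b − 1/a and ζ = (w1/w0)·δ − 1/b. Then 1 + a·ζ > 0 and 1 + b·ζ > 0, and u0(ζ) = u1(ζ). -/
/-- `ζ` is the intersection point of the marginal utilities `u0` and `u1`,
and `1 + a·ζ > 0`, `1 + b·ζ > 0`. -/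
theorem zeta_intersection (a b w0 w1 lam : ℝ) (hb : 0 < b) (hba : b < a)
    (hw0 : 0 < w0) (hw01 : w0 < w1) (hlam : 0 < lam) :
    let u0 : ℝ → ℝ := fun x => w0 / (2 * Real.log 2) * (a / (1 + a * x)) - lam
    let u1 : ℝ → ℝ := fun x =>
      w1 / (2 * Real.log 2) * (a / (1 + a * x) - b / (1 + b * x)) - lam
    let δ : ℝ := 1 / b - 1 / a
    let ζ : ℝ := (w1 / w0) * δ - 1 / b
    1 + a * ζ > 0 ∧ 1 + b * ζ > 0 ∧ u0 ζ = u1 ζ := by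
  intro u0 u1 δ ζ
  have ha : 0 < a := hb.trans hba
  have hb' : b ≠ 0 := ne_of_gt hb
  have ha' : a ≠ 0 := ne_of_gt ha
  have hw0' : w0 ≠ 0 := ne_of_gt hw0
  have hab : 0 < a - b := sub_pos.mpr hba
  have hww : 0 < w1 - w0 := sub_pos.mpr hw01
  have hw1 : 0 < w1 := hw0.trans hw01
  have haz : 1 + a * ζ = (w1 - w0) / w0 * ((a - b) / b) := by
    simp only [ζ, δ]; field_simp; ring
  have hbz : 1 + b * ζ = w1 / w0 * ((a - b) / a) := by
    simp only [ζ, δ]; field_simp; ring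
  have h1 : 1 + a * ζ > 0 := by rw [haz]; positivity
  have h2 : 1 + b * ζ > 0 := by rw [hbz]; positivity
  refine ⟨h1, h2, ?_⟩
  simp only [u0, u1, sub_left_inj]
  have h1' : (1 + a * ζ) ≠ 0 := ne_of_gt h1
  have h2' : (1 + b * ζ) ≠ 0 := ne_of_gt h2
  have hlog : Real.log 2 ≠ 0 := by
    have := Real.log_pos (by norm_num : (1:ℝ) < 2); linarith
  rw [haz, hbz]
  field_simp
  ring
end

section
/- Fix reals a > b > 0, w0 > 0, w1 > 0 and λ > 0 with w1·(a − b) > w0·a. Define u0(x) = (w0/(2·ln 2)) · a/(1 + a·x) − λ and u1(x) = (w1/(2·ln 2)) · (a/(1 + a·x) − b/(1 + b·x)) − λ, and set ζ = (w1/w0)·(1/b − 1/a) − 1/b (so ζ > 0). Then u1(x) > u0(x) for every x with 0 ≤ x < ζ, and u1(x) < u0(x) for every x > ζ. -/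
/-!
Since `a/(1+ax) - b/(1+bx) = (a-b)/((1+ax)(1+bx))`, the multiplier `λ` cancels from `u1 - u0`,
which becomes `w0·a·b·(ζ - x) / (2 ln 2 (1+ax)(1+bx))`. For `x ≥ 0` the factor in front of
`ζ - x` is positive, so the sign of `u1 - u0` is that of `ζ - x`.
-/

noncomputable def crossingPoint (a b w0 w1 : ℝ) : ℝ := (w1 / w0) * (1 / b - 1 / a) - 1 / b

lemma crossingPoint_eq {a b w0 w1 : ℝ} (ha : a ≠ 0) (hb : b ≠ 0) (hw0 : w0 ≠ 0) :
    crossingPoint a b w0 w1 = (w1 * (a - b) - w0 * a) / (w0 * a * b) := by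
  unfold crossingPoint
  field_simp

lemma crossingPoint_pos {a b w0 w1 : ℝ} (ha : 0 < a) (hb : 0 < b) (hw0 : 0 < w0)
    (hcase : w0 * a < w1 * (a - b)) : 0 < crossingPoint a b w0 w1 := by
  rw [crossingPoint_eq ha.ne' hb.ne' hw0.ne']
  exact div_pos (by linarith) (by positivity)

lemma div_one_add_mul_sub_div_one_add_mul {a b x : ℝ} (hax : 1 + a * x ≠ 0)
    (hbx : 1 + b * x ≠ 0) :
    a / (1 + a * x) - b / (1 + b * x) = (a - b) / ((1 + a * x) * (1 + b * x)) := by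
  rw [div_sub_div _ _ hax hbx]
  ring

lemma weighted_gap_eq {a b w0 w1 x : ℝ} (ha : a ≠ 0) (hb : b ≠ 0) (hw0 : w0 ≠ 0)
    (hax : 1 + a * x ≠ 0) (hbx : 1 + b * x ≠ 0) :
    w1 * (a / (1 + a * x) - b / (1 + b * x)) - w0 * (a / (1 + a * x)) =
      w0 * a * b / ((1 + a * x) * (1 + b * x)) * (crossingPoint a b w0 w1 - x) := by
  rw [div_one_add_mul_sub_div_one_add_mul hax hbx, crossingPoint_eq ha hb hw0]
  field_simp
  ring

theorem single_crossing_general (a b w0 w1 lam : ℝ) (hb : 0 < b) (hba : b < a)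
    (hw0 : 0 < w0)
    (hcase : w0 * a < w1 * (a - b)) :
    let u0 : ℝ → ℝ := fun x => w0 / (2 * Real.log 2) * (a / (1 + a * x)) - lam
    let u1 : ℝ → ℝ := fun x =>
      w1 / (2 * Real.log 2) * (a / (1 + a * x) - b / (1 + b * x)) - lam
    let ζ : ℝ := (w1 / w0) * (1 / b - 1 / a) - 1 / b
    0 < ζ ∧ (∀ x : ℝ, 0 ≤ x → x < ζ → u0 x < u1 x) ∧
      (∀ x : ℝ, ζ < x → u1 x < u0 x) := by
  intro u0 u1 ζ
  have ha : 0 < a := hb.trans hba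
  have hζ : 0 < ζ := crossingPoint_pos ha hb hw0 hcase
  have hgap : ∀ x, 0 ≤ x → ∃ c > 0, u1 x - u0 x = c * (ζ - x) := fun x hx => by
    have hax : 0 < 1 + a * x := by positivity
    have hbx : 0 < 1 + b * x := by positivity
    refine ⟨w0 * a * b / ((1 + a * x) * (1 + b * x)) / (2 * Real.log 2), by positivity, ?_⟩
    rw [div_mul_eq_mul_div, show ζ = crossingPoint a b w0 w1 from rfl,
      ← weighted_gap_eq ha.ne' hb.ne' hw0.ne' hax.ne' hbx.ne']
    ring
  refine ⟨hζ, fun x hx hxζ => ?_, fun x hxζ => ?_⟩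
  · obtain ⟨c, hc, hx_gap⟩ := hgap x hx
    exact sub_pos.1 (hx_gap ▸ mul_pos hc (sub_pos.2 hxζ))
  · obtain ⟨c, hc, hx_gap⟩ := hgap x (hζ.trans hxζ).le
    exact sub_neg.1 (hx_gap ▸ mul_neg_of_pos_of_neg hc (sub_neg.2 hxζ))

/-- Single-crossing property: under `w1·(a−b) > w0·a`, the confidential
marginal utility `u1` dominates `u0` on `[0, ζ)` and is dominated on
`(ζ, ∞)`. -/
theorem single_crossing (a b w0 w1 lam : ℝ) (hb : 0 < b) (hba : b < a)
    (hw0 : 0 < w0) (hw1 : 0 < w1) (hlam : 0 < lam)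
    (hcase : w0 * a < w1 * (a - b)) :
    let u0 : ℝ → ℝ := fun x => w0 / (2 * Real.log 2) * (a / (1 + a * x)) - lam
    let u1 : ℝ → ℝ := fun x =>
      w1 / (2 * Real.log 2) * (a / (1 + a * x) - b / (1 + b * x)) - lam
    let ζ : ℝ := (w1 / w0) * (1 / b - 1 / a) - 1 / b
    0 < ζ ∧ (∀ x : ℝ, 0 ≤ x → x < ζ → u0 x < u1 x) ∧
      (∀ x : ℝ, ζ < x → u1 x < u0 x) :=
  single_crossing_general a b w0 w1 lam hb hba hw0 hcase
end

section
/- Fix reals a > b > 0, w0 > 0, w1 > 0 and λ > 0 with w1·(a − b) ≤ w0·a. Define u0(x) = (w0/(2·ln 2)) · a/(1 + a·x) − λ and u1(x) = (w1/(2·ln 2)) · (a/(1 + a·x) − b/(1 + b·x)) − λ. Then u0(x) ≥ u1(x) for every x ≥ 0. -/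
/-- When `w1·(a − b) ≤ w0·a`, the common-message marginal utility `u0`
dominates the confidential-message marginal utility `u1` on `[0,∞)`. -/
theorem u0_dominates (a b w0 w1 lam : ℝ) (hb : 0 < b) (hba : b < a)
    (hw0 : 0 < w0) (hw1 : 0 < w1) (hlam : 0 < lam)
    (hcase : w1 * (a - b) ≤ w0 * a) :
    ∀ x : ℝ, 0 ≤ x →
      w1 / (2 * Real.log 2) * (a / (1 + a * x) - b / (1 + b * x)) - lam ≤
        w0 / (2 * Real.log 2) * (a / (1 + a * x)) - lam := by
  intro x hx
  have ha : 0 < a := hb.trans hba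
  have h1 : 0 < 1 + a * x := by positivity
  have h2 : 0 < 1 + b * x := by positivity
  have hlog : 0 < Real.log 2 := Real.log_pos (by norm_num)
  have h2l : 0 < 2 * Real.log 2 := by positivity
  have key : w1 * (a / (1 + a * x) - b / (1 + b * x)) ≤ w0 * (a / (1 + a * x)) := by
    rw [div_sub_div _ _ h1.ne' h2.ne', mul_div_assoc' w1, mul_div_assoc' w0,
      div_le_div_iff₀ (by positivity) h1]
    nlinarith [mul_nonneg hb.le hx,
      mul_nonneg (mul_nonneg hw1.le (sub_nonneg.2 hba.le)) (mul_nonneg hb.le hx),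
      mul_pos h1 h2]
  gcongr ?_ - lam
  calc w1 / (2 * Real.log 2) * (a / (1 + a * x) - b / (1 + b * x))
      = w1 * (a / (1 + a * x) - b / (1 + b * x)) / (2 * Real.log 2) := by ring
    _ ≤ w0 * (a / (1 + a * x)) / (2 * Real.log 2) := by gcongr
    _ = w0 / (2 * Real.log 2) * (a / (1 + a * x)) := by ring
end

section
/- Fix reals a > b > 0, w0 > 0, w1 > 0 and λ > 0. Define u0(x) = (w0/(2·ln 2)) · a/(1 + a·x) − λ and u1(x) = (w1/(2·ln 2)) · (a/(1 + a·x) − b/(1 + b·x)) − λ, and for p0, p1 ≥ 0 define L1(p0, p1) = (w0/2)·log2((1 + a·(p0 + p1))/(1 + a·p1)) + (w1/2)·log2((1 + a·p1)/(1 + b·p1)) − λ·(p0 + p1). Then for all p0, p1 ≥ 0, L1(p0, p1) ≤ ∫_{0}^{∞} max(max(u0(x), u1(x)), 0) dx, and this integral is finite. -/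
/-! `u0` is the derivative of `p ↦ (w0/2) log₂ (1 + a p) - λ p` and `u1` that of
`p ↦ (w1/2) log₂ ((1 + a p)/(1 + b p)) - λ p`, so `L1 p0 p1 = ∫₀^{p1} u1 + ∫_{p1}^{p1+p0} u0`.
Both integrands are bounded by the nonnegative `max (max u0 u1) 0` and the two intervals are
adjacent, which gives the bound. The integral is finite because both utilities tend to `-λ < 0`,
so the integrand vanishes eventually. -/

open MeasureTheory Filter Topology Set Real

lemma one_add_mul_pos {a x : ℝ} (ha : 0 ≤ a) (hx : 0 ≤ x) : 0 < 1 + a * x := by positivity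

lemma continuousOn_div_one_add_mul {a : ℝ} (ha : 0 ≤ a) :
    ContinuousOn (fun x => a / (1 + a * x)) (Ici 0) :=
  continuousOn_const.div (by fun_prop) fun _ hx => (one_add_mul_pos ha hx).ne'

lemma tendsto_div_one_add_mul_atTop {a : ℝ} (ha : 0 < a) :
    Tendsto (fun x => a / (1 + a * x)) atTop (𝓝 0) :=
  tendsto_const_nhds.div_atTop
    (tendsto_atTop_add_const_left _ 1 (tendsto_id.const_mul_atTop ha))

lemma hasDerivAt_log_one_add_mul {a x : ℝ} (h : 1 + a * x ≠ 0) :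
    HasDerivAt (fun y => log (1 + a * y)) (a / (1 + a * x)) x := by
  have hlin : HasDerivAt (fun y => 1 + a * y) a x := by
    simpa using ((hasDerivAt_id x).const_mul a).const_add 1
  exact hlin.log h

lemma intervalIntegrable_of_continuousOn_Ici {u : ℝ → ℝ} {c s t : ℝ}
    (hu : ContinuousOn u (Ici c)) (hs : c ≤ s) (ht : c ≤ t) : IntervalIntegrable u volume s t :=
  (hu.mono fun _ hx => (le_min hs ht).trans hx.1).intervalIntegrable

lemma integral_div_one_add_mul {a s t : ℝ} (ha : 0 ≤ a) (hs : 0 ≤ s) (ht : 0 ≤ t) :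
    ∫ x in s..t, a / (1 + a * x) = log (1 + a * t) - log (1 + a * s) :=
  intervalIntegral.integral_eq_sub_of_hasDerivAt
    (fun _ hx => hasDerivAt_log_one_add_mul (one_add_mul_pos ha ((le_min hs ht).trans hx.1)).ne')
    (intervalIntegrable_of_continuousOn_Ici (continuousOn_div_one_add_mul ha) hs ht)

lemma integrableOn_Ioi_of_continuousOn_of_eventuallyEq_zero {f : ℝ → ℝ} {c : ℝ}
    (hf : ContinuousOn f (Ici c)) (h0 : f =ᶠ[atTop] 0) : IntegrableOn f (Ioi c) := by
  obtain ⟨X, hX⟩ := eventually_atTop.1 h0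
  have hcX : c ≤ max c X := le_max_left c X
  rw [← Ioc_union_Ioi_eq_Ioi hcX]
  refine IntegrableOn.union ?_ ?_
  · exact (hf.mono Icc_subset_Ici_self).integrableOn_Icc.mono_set Ioc_subset_Icc_self
  · exact integrableOn_zero.congr_fun (fun x hx => (hX x ((le_max_right c X).trans hx.le)).symm)
      measurableSet_Ioi

lemma integrableOn_Ioi_max_zero_of_tendsto {g : ℝ → ℝ} {c l : ℝ}
    (hg : ContinuousOn g (Ici c)) (hlim : Tendsto g atTop (𝓝 l)) (hl : l < 0) :
    IntegrableOn (fun x => max (g x) 0) (Ioi c) :=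
  integrableOn_Ioi_of_continuousOn_of_eventuallyEq_zero (hg.sup continuousOn_const)
    ((hlim.eventually (gt_mem_nhds hl)).mono fun _ hx => max_eq_right hx.le)

lemma intervalIntegral_le_setIntegral_Ioi {f : ℝ → ℝ} {c t : ℝ}
    (hf : IntegrableOn f (Ioi c)) (hf0 : ∀ x ∈ Ioi c, 0 ≤ f x) (hct : c ≤ t) :
    ∫ x in c..t, f x ≤ ∫ x in Ioi c, f x := by
  rw [intervalIntegral.integral_of_le hct]
  exact setIntegral_mono_set hf
    ((ae_restrict_iff' measurableSet_Ioi).2 (Eventually.of_forall hf0))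
    Ioc_subset_Ioi_self.eventuallyLE

lemma intervalIntegral_add_le_setIntegral_Ioi {f g h : ℝ → ℝ} {c s t : ℝ}
    (hg : IntervalIntegrable g volume c s) (hh : IntervalIntegrable h volume s t)
    (hf : IntegrableOn f (Ioi c)) (hf0 : ∀ x ∈ Ioi c, 0 ≤ f x)
    (hgf : ∀ x ∈ Icc c s, g x ≤ f x) (hhf : ∀ x ∈ Icc s t, h x ≤ f x)
    (hcs : c ≤ s) (hst : s ≤ t) :
    (∫ x in c..s, g x) + ∫ x in s..t, h x ≤ ∫ x in Ioi c, f x := by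
  have hf_int {s t : ℝ} (hcs : c ≤ s) (hst : s ≤ t) : IntervalIntegrable f volume s t :=
    (intervalIntegrable_iff_integrableOn_Ioc_of_le hst).2
      (hf.mono_set fun _ hx => hcs.trans_lt hx.1)
  calc (∫ x in c..s, g x) + ∫ x in s..t, h x ≤ (∫ x in c..s, f x) + ∫ x in s..t, f x :=
        add_le_add (intervalIntegral.integral_mono_on hcs hg (hf_int le_rfl hcs) hgf)
          (intervalIntegral.integral_mono_on hst hh (hf_int hcs hst) hhf)
    _ = ∫ x in c..t, f x :=
        intervalIntegral.integral_add_adjacent_intervals (hf_int le_rfl hcs) (hf_int hcs hst)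
    _ ≤ ∫ x in Ioi c, f x := intervalIntegral_le_setIntegral_Ioi hf hf0 (hcs.trans hst)

lemma lagrangian_eq_integral_add_integral {a b w0 w1 lam p0 p1 : ℝ} (ha : 0 ≤ a) (hb : 0 ≤ b)
    (hp0 : 0 ≤ p0) (hp1 : 0 ≤ p1) :
    (w0 / 2) * logb 2 ((1 + a * (p0 + p1)) / (1 + a * p1)) +
      (w1 / 2) * logb 2 ((1 + a * p1) / (1 + b * p1)) - lam * (p0 + p1) =
    (∫ x in (0 : ℝ)..p1, w1 / (2 * log 2) * (a / (1 + a * x) - b / (1 + b * x)) - lam) +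
      ∫ x in p1..p1 + p0, w0 / (2 * log 2) * (a / (1 + a * x)) - lam := by
  have hp : 0 ≤ p1 + p0 := add_nonneg hp1 hp0
  have hia {s t : ℝ} := intervalIntegrable_of_continuousOn_Ici (s := s) (t := t)
    (continuousOn_div_one_add_mul ha)
  have hib {s t : ℝ} := intervalIntegrable_of_continuousOn_Ici (s := s) (t := t)
    (continuousOn_div_one_add_mul hb)
  rw [intervalIntegral.integral_sub (((hia le_rfl hp1).sub (hib le_rfl hp1)).const_mul _)
      intervalIntegrable_const, intervalIntegral.integral_const_mul,
    intervalIntegral.integral_sub (hia le_rfl hp1) (hib le_rfl hp1),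
    intervalIntegral.integral_sub ((hia hp1 hp).const_mul _) intervalIntegrable_const,
    intervalIntegral.integral_const_mul, integral_div_one_add_mul ha le_rfl hp1,
    integral_div_one_add_mul hb le_rfl hp1, integral_div_one_add_mul ha hp1 hp,
    intervalIntegral.integral_const, intervalIntegral.integral_const, logb, logb,
    log_div (one_add_mul_pos ha (by positivity)).ne' (one_add_mul_pos ha hp1).ne',
    log_div (one_add_mul_pos ha hp1).ne' (one_add_mul_pos hb hp1).ne', add_comm p0 p1]
  have hlog2 : log 2 ≠ 0 := (log_pos one_lt_two).ne'
  simp only [mul_zero, add_zero, log_one, smul_eq_mul]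
  field_simp
  ring

theorem L1_upper_bound_general (a b w0 w1 lam : ℝ) (hb : 0 < b) (hba : b < a)
    (hlam : 0 < lam) :
    let u0 : ℝ → ℝ := fun x => w0 / (2 * Real.log 2) * (a / (1 + a * x)) - lam
    let u1 : ℝ → ℝ := fun x =>
      w1 / (2 * Real.log 2) * (a / (1 + a * x) - b / (1 + b * x)) - lam
    let L1 : ℝ → ℝ → ℝ := fun p0 p1 =>
      (w0 / 2) * Real.logb 2 ((1 + a * (p0 + p1)) / (1 + a * p1)) +
      (w1 / 2) * Real.logb 2 ((1 + a * p1) / (1 + b * p1)) - lam * (p0 + p1)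
    (∀ p0 p1 : ℝ, 0 ≤ p0 → 0 ≤ p1 →
      L1 p0 p1 ≤ ∫ x in Set.Ioi (0:ℝ), max (max (u0 x) (u1 x)) 0) ∧
    IntegrableOn (fun x => max (max (u0 x) (u1 x)) 0) (Set.Ioi (0:ℝ)) := by
  intro u0 u1 L1
  have ha : 0 < a := hb.trans hba
  have hu0 : ContinuousOn u0 (Ici 0) :=
    ((continuousOn_div_one_add_mul ha.le).const_mul _).sub continuousOn_const
  have hu1 : ContinuousOn u1 (Ici 0) :=
    (((continuousOn_div_one_add_mul ha.le).sub
      (continuousOn_div_one_add_mul hb.le)).const_mul _).sub continuousOn_const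
  have hu0_lim : Tendsto u0 atTop (𝓝 (-lam)) := by
    simpa using ((tendsto_div_one_add_mul_atTop ha).const_mul (w0 / (2 * log 2))).sub_const lam
  have hu1_lim : Tendsto u1 atTop (𝓝 (-lam)) := by
    simpa using (((tendsto_div_one_add_mul_atTop ha).sub
      (tendsto_div_one_add_mul_atTop hb)).const_mul (w1 / (2 * log 2))).sub_const lam
  have hint : IntegrableOn (fun x => max (max (u0 x) (u1 x)) 0) (Ioi 0) :=
    integrableOn_Ioi_max_zero_of_tendsto (hu0.sup hu1) (by simpa using hu0_lim.max hu1_lim)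
      (neg_neg_of_pos hlam)
  refine ⟨fun p0 p1 hp0 hp1 => ?_, hint⟩
  calc L1 p0 p1 = (∫ x in (0 : ℝ)..p1, u1 x) + ∫ x in p1..p1 + p0, u0 x :=
        lagrangian_eq_integral_add_integral ha.le hb.le hp0 hp1
    _ ≤ _ := intervalIntegral_add_le_setIntegral_Ioi
        (intervalIntegrable_of_continuousOn_Ici hu1 le_rfl hp1)
        (intervalIntegrable_of_continuousOn_Ici hu0 hp1 (by positivity)) hint
        (fun _ _ => le_max_right _ _) (fun _ _ => (le_max_right _ _).trans (le_max_left _ _))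
        (fun _ _ => (le_max_left _ _).trans (le_max_left _ _)) hp1 (by linarith)

/-- Upper bound on the per-sub-channel Lagrangian `L1` by the integral of the
positive part of the pointwise maximum of the marginal utilities, which is a
finite integral. -/
theorem L1_upper_bound (a b w0 w1 lam : ℝ) (hb : 0 < b) (hba : b < a)
    (hw0 : 0 < w0) (hw1 : 0 < w1) (hlam : 0 < lam) :
    let u0 : ℝ → ℝ := fun x => w0 / (2 * Real.log 2) * (a / (1 + a * x)) - lam
    let u1 : ℝ → ℝ := fun x =>
      w1 / (2 * Real.log 2) * (a / (1 + a * x) - b / (1 + b * x)) - lam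
    let L1 : ℝ → ℝ → ℝ := fun p0 p1 =>
      (w0 / 2) * Real.logb 2 ((1 + a * (p0 + p1)) / (1 + a * p1)) +
      (w1 / 2) * Real.logb 2 ((1 + a * p1) / (1 + b * p1)) - lam * (p0 + p1)
    (∀ p0 p1 : ℝ, 0 ≤ p0 → 0 ≤ p1 →
      L1 p0 p1 ≤ ∫ x in Set.Ioi (0:ℝ), max (max (u0 x) (u1 x)) 0) ∧
    IntegrableOn (fun x => max (max (u0 x) (u1 x)) 0) (Set.Ioi (0:ℝ)) :=
  L1_upper_bound_general a b w0 w1 lam hb hba hlam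
end

section
/- Fix reals a > b > 0, w0 > 0, w1 > 0 and λ > 0 such that w0·a/(2·ln 2) ≤ λ and w1·(a − b)/(2·ln 2) ≤ λ. For p0, p1 ≥ 0 define L1(p0, p1) = (w0/2)·log2((1 + a·(p0 + p1))/(1 + a·p1)) + (w1/2)·log2((1 + a·p1)/(1 + b·p1)) − λ·(p0 + p1). Then L1(p0, p1) ≤ 0 = L1(0, 0) for all p0, p1 ≥ 0; i.e., (0, 0) is a global maximizer of L1 on [0, ∞)². -/
/-- When the marginal utilities are nonpositive at zero power, `(0,0)` is a
global maximizer of the per-sub-channel Lagrangian `L1` on `[0,∞)²`. -/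
theorem L1_max_at_zero (a b w0 w1 lam : ℝ) (hb : 0 < b) (hba : b < a)
    (hw0 : 0 < w0) (hw1 : 0 < w1) (hlam : 0 < lam)
    (h0 : w0 * a / (2 * Real.log 2) ≤ lam)
    (h1 : w1 * (a - b) / (2 * Real.log 2) ≤ lam) :
    let L1 : ℝ → ℝ → ℝ := fun p0 p1 =>
      (w0 / 2) * Real.logb 2 ((1 + a * (p0 + p1)) / (1 + a * p1)) +
      (w1 / 2) * Real.logb 2 ((1 + a * p1) / (1 + b * p1)) - lam * (p0 + p1)
    (∀ p0 p1 : ℝ, 0 ≤ p0 → 0 ≤ p1 → L1 p0 p1 ≤ 0) ∧ L1 0 0 = 0 := by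
  intro L1
  have hlog2 : 0 < Real.log 2 := Real.log_pos (by norm_num)
  have ha : 0 < a := hb.trans hba
  constructor
  · intro p0 p1 hp0 hp1
    have hd1 : (0:ℝ) < 1 + a * p1 := by nlinarith
    have hd0 : (0:ℝ) < 1 + a * (p0 + p1) := by nlinarith
    have hdb : (0:ℝ) < 1 + b * p1 := by nlinarith
    -- bound first log term
    have hr1 : Real.log ((1 + a * (p0 + p1)) / (1 + a * p1)) ≤ a * p0 := by
      have hle := Real.log_le_sub_one_of_pos (div_pos hd0 hd1)
      have heq : (1 + a * (p0 + p1)) / (1 + a * p1) - 1 = a * p0 / (1 + a * p1) := by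
        field_simp
        ring
      have hdiv : a * p0 / (1 + a * p1) ≤ a * p0 := by
        apply div_le_self (by positivity)
        nlinarith
      linarith [heq ▸ hle]
    have hr2 : Real.log ((1 + a * p1) / (1 + b * p1)) ≤ (a - b) * p1 := by
      have hle := Real.log_le_sub_one_of_pos (div_pos hd1 hdb)
      have heq : (1 + a * p1) / (1 + b * p1) - 1 = (a - b) * p1 / (1 + b * p1) := by
        field_simp
        ring
      have hdiv : (a - b) * p1 / (1 + b * p1) ≤ (a - b) * p1 := by
        apply div_le_self (mul_nonneg (by linarith) hp1)
        nlinarith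
      linarith [heq ▸ hle]
    -- rewrite logb as log / log 2
    have hL : L1 p0 p1 = (w0 / 2) * (Real.log ((1 + a * (p0 + p1)) / (1 + a * p1)) / Real.log 2) +
        (w1 / 2) * (Real.log ((1 + a * p1) / (1 + b * p1)) / Real.log 2) - lam * (p0 + p1) := by
      simp [L1, Real.logb]
    rw [hL]
    have hb1 : (w0 / 2) * (Real.log ((1 + a * (p0 + p1)) / (1 + a * p1)) / Real.log 2)
        ≤ lam * p0 := by
      calc (w0 / 2) * (Real.log ((1 + a * (p0 + p1)) / (1 + a * p1)) / Real.log 2)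
          ≤ (w0 / 2) * ((a * p0) / Real.log 2) := by
            apply mul_le_mul_of_nonneg_left _ (by positivity)
            exact div_le_div_of_nonneg_right hr1 hlog2.le
        _ = (w0 * a / (2 * Real.log 2)) * p0 := by ring
        _ ≤ lam * p0 := mul_le_mul_of_nonneg_right h0 hp0
    have hb2 : (w1 / 2) * (Real.log ((1 + a * p1) / (1 + b * p1)) / Real.log 2)
        ≤ lam * p1 := by
      calc (w1 / 2) * (Real.log ((1 + a * p1) / (1 + b * p1)) / Real.log 2)
          ≤ (w1 / 2) * (((a - b) * p1) / Real.log 2) := by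
            apply mul_le_mul_of_nonneg_left _ (by positivity)
            exact div_le_div_of_nonneg_right hr2 hlog2.le
        _ = (w1 * (a - b) / (2 * Real.log 2)) * p1 := by ring
        _ ≤ lam * p1 := mul_le_mul_of_nonneg_right h1 hp1
    linarith
  · simp [L1]
end

section
/- Fix reals a > b > 0, w0 > 0, w1 > 0 and λ > 0 such that w1·(a − b) > w0·a and w1·(a − b)/(2·ln 2) ≥ λ. Set δ = 1/b − 1/a, γ = w0/(2·λ·ln 2) − 1/a, ζ = (w1/w0)·δ − 1/b, and β = (1/2)·√(δ·(δ + 2·w1/(λ·ln 2))) − (1/2)·(1/b + 1/a), and assume γ < ζ. For p0, p1 ≥ 0 define L1(p0, p1) = (w0/2)·log2((1 + a·(p0 + p1))/(1 + a·p1)) + (w1/2)·log2((1 + a·p1)/(1 + b·p1)) − λ·(p0 + p1). Then 0 ≤ β ≤ ζ and L1(p0, p1) ≤ L1(0, β) for all p0, p1 ≥ 0; i.e., allocating all power to the confidential message at level β is optimal. -/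
/-!
With `P = p0 + p1`, the Lagrangian splits as `A P + B p1`, where
`A x = (w0/2) log (1 + a x) - λ x` is concave with its maximum at `γ`, and
`B x = ((w1 - w0)/2) log (1 + a x) - (w1/2) log (1 + b x)` is increasing on `[0, ζ]`.
Hence moving to `(0, max p1 γ)` never lowers the Lagrangian. On the line `p0 = 0` it is
`(w1/2) log ((1 + a x)/(1 + b x)) - λ x`, which is maximised over `x ≥ 0` at its stationary
point `β`, the larger root of `2 λ ln 2 (1 + a x)(1 + b x) = w1 (a - b)`; `β ≤ ζ` because `γ < ζ` makes
that quadratic exceed `w1 (a - b)` at `ζ`. Every maximality claim comes from the tangent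
inequality `log u ≤ log v + u/v - 1`.
-/
open Real Set

theorem log_sub_log_le {u v : ℝ} (hu : 0 < u) (hv : 0 < v) : log u - log v ≤ u / v - 1 := by
  rw [← log_div hu.ne' hv.ne']
  exact log_le_sub_one_of_pos (div_pos hu hv)

theorem mul_log_one_add_mul_sub_mul_le {k a μ x y : ℝ} (hk : 0 ≤ k) (hx : 0 < 1 + a * x)
    (hy : 0 < 1 + a * y) (hslope : k * a * (x - y) ≤ μ * (1 + a * y) * (x - y)) :
    k * log (1 + a * x) - μ * x ≤ k * log (1 + a * y) - μ * y := by
  have htangent : k * (log (1 + a * x) - log (1 + a * y)) ≤ k * a * (x - y) / (1 + a * y) := by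
    calc k * (log (1 + a * x) - log (1 + a * y))
        ≤ k * ((1 + a * x) / (1 + a * y) - 1) :=
          mul_le_mul_of_nonneg_left (log_sub_log_le hx hy) hk
      _ = k * a * (x - y) / (1 + a * y) := by field_simp; ring
  have hlinear : k * a * (x - y) / (1 + a * y) ≤ μ * (x - y) := by
    rw [div_le_iff₀ hy]; linarith
  linarith

theorem mul_log_div_sub_mul_le_of_stationary {k a b μ x β : ℝ} (hk : 0 ≤ k) (ha : 0 ≤ a)
    (hb : 0 ≤ b) (hμ : 0 ≤ μ) (hx : 0 ≤ x) (hβ : 0 ≤ β)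
    (hstat : k * (a - b) = μ * ((1 + a * β) * (1 + b * β))) :
    k * log ((1 + a * x) / (1 + b * x)) - μ * x ≤ k * log ((1 + a * β) / (1 + b * β)) - μ * β := by
  have hax : 0 < 1 + a * x := by positivity
  have hbx : 0 < 1 + b * x := by positivity
  have haβ : 0 < 1 + a * β := by positivity
  have hbβ : 0 < 1 + b * β := by positivity
  have htangent := log_sub_log_le (div_pos hax hbx) (div_pos haβ hbβ)
  -- the tangent bound at `β` overshoots the linear cost by exactly `μ b (x - β)² / (1 + b x)`
  have hgap : k * ((1 + a * x) / (1 + b * x) / ((1 + a * β) / (1 + b * β)) - 1) - μ * (x - β)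
      = -(μ * b * (x - β) ^ 2 / (1 + b * x)) := by
    field_simp
    linear_combination (x - β) * hstat
  have : 0 ≤ μ * b * (x - β) ^ 2 / (1 + b * x) := by positivity
  have := mul_le_mul_of_nonneg_left htangent hk
  linarith

theorem monotoneOn_mul_log_sub_mul_log {p q a b ζ : ℝ} (ha : 0 ≤ a) (hb : 0 ≤ b)
    (hderiv : ∀ x ∈ Icc 0 ζ, q * b * (1 + a * x) ≤ p * a * (1 + b * x)) :
    MonotoneOn (fun x => p * log (1 + a * x) - q * log (1 + b * x)) (Icc 0 ζ) := by
  have hasDeriv : ∀ x ∈ Icc 0 ζ, HasDerivAt (fun x => p * log (1 + a * x) - q * log (1 + b * x))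
      (p * (a / (1 + a * x)) - q * (b / (1 + b * x))) x := by
    intro x hx
    have hlog (c : ℝ) (hc : 0 ≤ c) : HasDerivAt (fun x => log (1 + c * x)) (c / (1 + c * x)) x := by
      have hcx : 0 < 1 + c * x := by have := hx.1; positivity
      simpa using (((hasDerivAt_id x).const_mul c).const_add 1).log hcx.ne'
    exact ((hlog a ha).const_mul p).sub ((hlog b hb).const_mul q)
  refine monotoneOn_of_hasDerivWithinAt_nonneg (convex_Icc 0 ζ)
    (fun x hx => (hasDeriv x hx).continuousAt.continuousWithinAt)
    (fun x hx => (hasDeriv x (interior_subset hx)).hasDerivWithinAt) fun x hx => ?_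
  obtain ⟨hx0, -⟩ := interior_subset hx
  have hax : 0 < 1 + a * x := by positivity
  have hbx : 0 < 1 + b * x := by positivity
  have := hderiv x (interior_subset hx)
  rw [mul_div_assoc', mul_div_assoc', sub_nonneg, div_le_div_iff₀ hbx hax]
  linarith

theorem monotoneOn_confidential_gain {a b w0 w1 ζ : ℝ} (ha : 0 ≤ a) (hb : 0 ≤ b) (hw0 : 0 ≤ w0)
    (hζ : w1 * (a - b) = w0 * a * (1 + b * ζ)) :
    MonotoneOn (fun x => (w1 - w0) / 2 * log (1 + a * x) - w1 / 2 * log (1 + b * x)) (Icc 0 ζ) := by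
  refine monotoneOn_mul_log_sub_mul_log ha hb fun x hx => ?_
  have hζx : 0 ≤ ζ - x := sub_nonneg.2 hx.2
  have : (w1 - w0) / 2 * a * (1 + b * x) - w1 / 2 * b * (1 + a * x) = w0 * a * b * (ζ - x) / 2 := by
    linear_combination hζ / 2
  have : 0 ≤ w0 * a * b * (ζ - x) / 2 := by positivity
  linarith

noncomputable def lagrangian (a b w0 w1 μ p0 p1 : ℝ) : ℝ :=
  w0 / 2 * log ((1 + a * (p0 + p1)) / (1 + a * p1)) +
    w1 / 2 * log ((1 + a * p1) / (1 + b * p1)) - μ * (p0 + p1)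

section lagrangian

variable {a b w0 w1 μ : ℝ}

theorem lagrangian_zero_left (x : ℝ) (hax : 0 < 1 + a * x) :
    lagrangian a b w0 w1 μ 0 x = w1 / 2 * log ((1 + a * x) / (1 + b * x)) - μ * x := by
  simp [lagrangian, hax.ne']

theorem lagrangian_eq_add {p0 p1 : ℝ} (ha : 0 ≤ a) (hb : 0 ≤ b) (hp0 : 0 ≤ p0) (hp1 : 0 ≤ p1) :
    lagrangian a b w0 w1 μ p0 p1 = (w0 / 2 * log (1 + a * (p0 + p1)) - μ * (p0 + p1)) +
      ((w1 - w0) / 2 * log (1 + a * p1) - w1 / 2 * log (1 + b * p1)) := by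
  have hP : 0 < 1 + a * (p0 + p1) := by positivity
  have hap : 0 < 1 + a * p1 := by positivity
  have hbp : 0 < 1 + b * p1 := by positivity
  rw [lagrangian, log_div hP.ne' hap.ne', log_div hap.ne' hbp.ne']
  ring

/-- The witness is `max p1 γ`. -/
theorem exists_le_lagrangian_zero_left {γ p0 p1 : ℝ} (ha : 0 ≤ a) (hb : 0 ≤ b) (hw0 : 0 ≤ w0)
    (hμ : 0 ≤ μ) (hγ : w0 * a = 2 * μ * (1 + a * γ))
    (hmono : MonotoneOn (fun x => (w1 - w0) / 2 * log (1 + a * x) - w1 / 2 * log (1 + b * x))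
      (Icc 0 γ))
    (hp0 : 0 ≤ p0) (hp1 : 0 ≤ p1) :
    ∃ m, 0 ≤ m ∧ lagrangian a b w0 w1 μ p0 p1 ≤ lagrangian a b w0 w1 μ 0 m := by
  rcases le_or_gt γ p1 with hγp | hpγ
  · refine ⟨p1, hp1, ?_⟩
    rw [lagrangian_eq_add ha hb hp0 hp1, lagrangian_eq_add ha hb le_rfl hp1, zero_add]
    have hslope : w0 / 2 * a * (p0 + p1 - p1) ≤ μ * (1 + a * p1) * (p0 + p1 - p1) := by
      have : μ * (1 + a * γ) ≤ μ * (1 + a * p1) := by gcongr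
      nlinarith
    have := mul_log_one_add_mul_sub_mul_le (div_nonneg hw0 two_pos.le) (by positivity)
      (by positivity) hslope
    linarith
  · have hγ0 : 0 ≤ γ := hp1.trans hpγ.le
    refine ⟨γ, hγ0, ?_⟩
    rw [lagrangian_eq_add ha hb hp0 hp1, lagrangian_eq_add ha hb le_rfl hγ0, zero_add]
    have hslope : w0 / 2 * a * (p0 + p1 - γ) ≤ μ * (1 + a * γ) * (p0 + p1 - γ) := by
      rw [show w0 / 2 * a = μ * (1 + a * γ) by linarith]
    have hA := mul_log_one_add_mul_sub_mul_le (div_nonneg hw0 two_pos.le) (by positivity)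
      (by positivity) hslope
    have hB := hmono ⟨hp1, hpγ.le⟩ ⟨hγ0, le_rfl⟩ hpγ.le
    simp only at hB
    linarith

end lagrangian

section stationary

variable {a b w1 μ β : ℝ}

theorem stationary_point_eq (ha : 0 < a) (hb : 0 < b) (hba : b ≤ a) (hw1 : 0 ≤ w1) (hμ : 0 < μ)
    (hβ : β = 1 / 2 * √((1 / b - 1 / a) * (1 / b - 1 / a + 2 * w1 / μ)) - 1 / 2 * (1 / b + 1 / a)) :
    w1 / 2 * (a - b) = μ * ((1 + a * β) * (1 + b * β)) := by
  have hδ : 0 ≤ 1 / b - 1 / a := sub_nonneg.2 (one_div_le_one_div_of_le hb hba)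
  have hsq := sq_sqrt (by positivity : 0 ≤ (1 / b - 1 / a) * (1 / b - 1 / a + 2 * w1 / μ))
  generalize √((1 / b - 1 / a) * (1 / b - 1 / a + 2 * w1 / μ)) = s at hsq hβ
  subst hβ
  linear_combination (norm := skip) (-(a * b * μ) / 4) * hsq
  field_simp
  ring

theorem stationary_point_nonneg (ha : 0 < a) (hb : 0 < b) (hμ : 0 < μ)
    (hcost : 2 * μ ≤ w1 * (a - b))
    (hβ : β = 1 / 2 * √((1 / b - 1 / a) * (1 / b - 1 / a + 2 * w1 / μ)) - 1 / 2 * (1 / b + 1 / a)) :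
    0 ≤ β := by
  have hdisc : (1 / b + 1 / a) ^ 2 ≤ (1 / b - 1 / a) * (1 / b - 1 / a + 2 * w1 / μ) := by
    rw [← sub_nonneg]
    have : (1 / b - 1 / a) * (1 / b - 1 / a + 2 * w1 / μ) - (1 / b + 1 / a) ^ 2
        = 2 * (w1 * (a - b) - 2 * μ) / (μ * a * b) := by
      field_simp
      ring
    rw [this]
    have := sub_nonneg.2 hcost
    positivity
  have := (abs_le_sqrt hdisc).trans' (le_abs_self _)
  linarith

theorem stationary_point_le {w0 γ ζ : ℝ} (ha : 0 < a) (hb : 0 < b) (hw0 : 0 < w0) (hμ : 0 < μ)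
    (hβ0 : 0 ≤ β)
    (hstat : w1 / 2 * (a - b) = μ * ((1 + a * β) * (1 + b * β)))
    (hγ : w0 * a = 2 * μ * (1 + a * γ)) (hζ : w1 * (a - b) = w0 * a * (1 + b * ζ))
    (hpos : 0 < w1 * (a - b))
    (hγζ : γ < ζ) : β ≤ ζ := by
  by_contra! hζβ
  have hbζ : 0 < 1 + b * ζ := pos_of_mul_pos_right (hζ ▸ hpos) (by positivity)
  have haγ : 0 < 1 + a * γ := pos_of_mul_pos_right (hγ ▸ mul_pos hw0 ha) (by positivity)
  have haζ : 0 < 1 + a * ζ := by nlinarith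
  have : (1 + a * ζ) * (1 + b * ζ) ≤ (1 + a * β) * (1 + b * β) := by gcongr
  have : (1 + a * γ) * (1 + b * ζ) < (1 + a * ζ) * (1 + b * ζ) := by gcongr
  nlinarith

end stationary

theorem L1_max_at_beta_general (a b w0 w1 lam : ℝ) (hb : 0 < b) (hba : b < a)
    (hw0 : 0 < w0) (hw1 : 0 < w1) (hlam : 0 < lam)
    (hu1zero : lam ≤ w1 * (a - b) / (2 * Real.log 2)) :
    let δ : ℝ := 1 / b - 1 / a
    let γ : ℝ := w0 / (2 * lam * Real.log 2) - 1 / a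
    let ζ : ℝ := (w1 / w0) * δ - 1 / b
    let β : ℝ := (1 / 2) * Real.sqrt (δ * (δ + 2 * w1 / (lam * Real.log 2))) -
      (1 / 2) * (1 / b + 1 / a)
    let L1 : ℝ → ℝ → ℝ := fun p0 p1 =>
      (w0 / 2) * Real.logb 2 ((1 + a * (p0 + p1)) / (1 + a * p1)) +
      (w1 / 2) * Real.logb 2 ((1 + a * p1) / (1 + b * p1)) - lam * (p0 + p1)
    γ < ζ →
      (0 ≤ β ∧ β ≤ ζ ∧ ∀ p0 p1 : ℝ, 0 ≤ p0 → 0 ≤ p1 → L1 p0 p1 ≤ L1 0 β) := by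
  intro δ γ ζ β L1 hγζ
  have ha : 0 < a := hb.trans hba
  have hlog2 : 0 < log 2 := log_pos one_lt_two
  -- `lam` prices power in bits; `μ` is the same price in nats
  set μ := lam * log 2
  have hμ : 0 < μ := mul_pos hlam hlog2
  have hL1 (p0 p1 : ℝ) : L1 p0 p1 = lagrangian a b w0 w1 μ p0 p1 / log 2 := by
    simp only [L1, lagrangian, logb, μ]
    field_simp
  have hcost : 2 * μ ≤ w1 * (a - b) := by
    rw [le_div_iff₀ (by positivity)] at hu1zero
    linarith
  have hγ : w0 * a = 2 * μ * (1 + a * γ) := by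
    simp only [γ]; field_simp; ring
  have hζ : w1 * (a - b) = w0 * a * (1 + b * ζ) := by
    simp only [ζ, δ]; field_simp; ring
  have hβ0 : 0 ≤ β := stationary_point_nonneg ha hb hμ hcost rfl
  have hstat := stationary_point_eq ha hb hba.le hw1.le hμ (β := β) rfl
  refine ⟨hβ0, stationary_point_le ha hb hw0 hμ hβ0 hstat hγ hζ (mul_pos hw1 (sub_pos.2 hba)) hγζ,
    fun p0 p1 hp0 hp1 => ?_⟩
  have hmono := (monotoneOn_confidential_gain ha.le hb.le hw0.le hζ).mono (Icc_subset_Icc_right hγζ.le)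
  obtain ⟨m, hm0, hm⟩ := exists_le_lagrangian_zero_left ha.le hb.le hw0.le hμ.le hγ hmono hp0 hp1
  rw [hL1, hL1]
  gcongr
  calc lagrangian a b w0 w1 μ p0 p1 ≤ lagrangian a b w0 w1 μ 0 m := hm
    _ ≤ lagrangian a b w0 w1 μ 0 β := by
      rw [lagrangian_zero_left m (by positivity), lagrangian_zero_left β (by positivity)]
      exact mul_log_div_sub_mul_le_of_stationary (by positivity) ha.le hb.le hμ.le hm0 hβ0 hstat

/-- When `γ < ζ` and `u1(0) ≥ 0`, allocating all power to the confidential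
message at level `β` is optimal for the per-sub-channel Lagrangian `L1`, and
`0 ≤ β ≤ ζ`. -/
theorem L1_max_at_beta (a b w0 w1 lam : ℝ) (hb : 0 < b) (hba : b < a)
    (hw0 : 0 < w0) (hw1 : 0 < w1) (hlam : 0 < lam)
    (hcase : w0 * a < w1 * (a - b))
    (hu1zero : lam ≤ w1 * (a - b) / (2 * Real.log 2)) :
    let δ : ℝ := 1 / b - 1 / a
    let γ : ℝ := w0 / (2 * lam * Real.log 2) - 1 / a
    let ζ : ℝ := (w1 / w0) * δ - 1 / b
    let β : ℝ := (1 / 2) * Real.sqrt (δ * (δ + 2 * w1 / (lam * Real.log 2))) -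
      (1 / 2) * (1 / b + 1 / a)
    let L1 : ℝ → ℝ → ℝ := fun p0 p1 =>
      (w0 / 2) * Real.logb 2 ((1 + a * (p0 + p1)) / (1 + a * p1)) +
      (w1 / 2) * Real.logb 2 ((1 + a * p1) / (1 + b * p1)) - lam * (p0 + p1)
    γ < ζ →
      (0 ≤ β ∧ β ≤ ζ ∧ ∀ p0 p1 : ℝ, 0 ≤ p0 → 0 ≤ p1 → L1 p0 p1 ≤ L1 0 β) :=
  L1_max_at_beta_general a b w0 w1 lam hb hba hw0 hw1 hlam hu1zero
end

section
/- Fix reals a > b > 0, w0 > 0, w1 > 0 and λ > 0 such that w1·(a − b) > w0·a. Set δ = 1/b − 1/a, γ = w0/(2·λ·ln 2) − 1/a and ζ = (w1/w0)·δ − 1/b, and assume γ ≥ ζ. For p0, p1 ≥ 0 define L1(p0, p1) = (w0/2)·log2((1 + a·(p0 + p1))/(1 + a·p1)) + (w1/2)·log2((1 + a·p1)/(1 + b·p1)) − λ·(p0 + p1). Then L1(p0, p1) ≤ L1(γ − ζ, ζ) for all p0, p1 ≥ 0; i.e., allocating power ζ to the confidential message and γ − ζ to the common message is optimal. -/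
/-!
Since `log₂((1 + a(p₀+p₁))/(1 + a p₁)) = log₂(1 + a(p₀+p₁)) − log₂(1 + a p₁)`, the Lagrangian
splits as `F(p₀ + p₁) + G(p₁)`, where `F = totalPowerUtility` depends only on the total power and
`G = confidentialGain` is the gain of the confidential message over the common one. Both are unimodal on `[0, ∞)`: `F'(t)` is a positive
multiple of `γ − t` and `G'(t)` a positive multiple of `ζ − t`. So `F` peaks at `γ`, `G` at `ζ`,
and both maxima are attained simultaneously by `p₁ = ζ`, `p₀ = γ − ζ ≥ 0`.
-/

open Real Set

lemma isMaxOn_Ici_of_hasDerivAt_mul_sub {f g : ℝ → ℝ} {a c : ℝ} (hac : a ≤ c)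
    (hf : ∀ t ∈ Ici a, HasDerivAt f (g t * (c - t)) t) (hg : ∀ t ∈ Ici a, 0 ≤ g t) :
    IsMaxOn f (Ici a) c := by
  have hdiff : DifferentiableOn ℝ f (Ici a) := fun t ht =>
    (hf t ht).differentiableAt.differentiableWithinAt
  refine isMaxOn_Ici_of_deriv (hf a self_mem_Ici).continuousAt (hf c hac).continuousAt
    (hdiff.mono (Ioo_subset_Icc_self.trans Icc_subset_Ici_self))
    (hdiff.mono (Ioi_subset_Ici hac)) ?_ ?_
  · intro t ht
    rw [(hf t ht.1.le).deriv]
    exact mul_nonneg (hg t ht.1.le) (sub_nonneg.mpr ht.2.le)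
  · intro t ht
    have ht' : t ∈ Ici a := hac.trans ht.le
    rw [(hf t ht').deriv]
    exact mul_nonpos_of_nonneg_of_nonpos (hg t ht') (sub_nonpos.mpr ht.le)

lemma hasDerivAt_logb_one_add_mul (b : ℝ) {k t : ℝ} (h : 1 + k * t ≠ 0) :
    HasDerivAt (fun x => logb b (1 + k * x)) (k / ((1 + k * t) * log b)) t := by
  have hlog := ((((hasDerivAt_id t).const_mul k).const_add 1).log (by simpa using h)).div_const
    (log b)
  simpa [logb, div_div] using hlog

noncomputable def totalPowerUtility (a w0 lam t : ℝ) : ℝ :=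
  w0 / 2 * logb 2 (1 + a * t) - lam * t

noncomputable def confidentialGain (a b w0 w1 p : ℝ) : ℝ :=
  w1 / 2 * (logb 2 (1 + a * p) - logb 2 (1 + b * p)) - w0 / 2 * logb 2 (1 + a * p)

lemma isMaxOn_totalPowerUtility {a w0 lam : ℝ} (ha : 0 < a) (hlam : 0 < lam)
    (hγ : 0 ≤ w0 / (2 * lam * log 2) - 1 / a) :
    IsMaxOn (totalPowerUtility a w0 lam) (Ici 0) (w0 / (2 * lam * log 2) - 1 / a) := by
  refine isMaxOn_Ici_of_hasDerivAt_mul_sub (g := fun t => lam * a / (1 + a * t)) hγ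
    (fun t ht => ?_) (fun t ht => by have : 0 ≤ t := ht; positivity)
  have hat : 0 < 1 + a * t := by have : 0 ≤ t := ht; positivity
  have hlog2 := Real.log_pos one_lt_two
  refine (((hasDerivAt_logb_one_add_mul 2 hat.ne').const_mul (w0 / 2)).sub
    ((hasDerivAt_id t).const_mul lam)).congr_deriv ?_
  field_simp
  ring

lemma isMaxOn_confidentialGain {a b w0 w1 : ℝ} (hb : 0 < b) (hba : b < a) (hw0 : 0 < w0)
    (hζ : 0 ≤ w1 / w0 * (1 / b - 1 / a) - 1 / b) :
    IsMaxOn (confidentialGain a b w0 w1) (Ici 0) (w1 / w0 * (1 / b - 1 / a) - 1 / b) := by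
  have ha : 0 < a := hb.trans hba
  refine isMaxOn_Ici_of_hasDerivAt_mul_sub
    (g := fun t => w0 * a * b / (2 * log 2 * (1 + a * t) * (1 + b * t))) hζ
    (fun t ht => ?_) (fun t ht => by have : 0 ≤ t := ht; positivity)
  have ht : 0 ≤ t := ht
  have hat : 0 < 1 + a * t := by positivity
  have hbt : 0 < 1 + b * t := by positivity
  have hA := hasDerivAt_logb_one_add_mul 2 hat.ne'
  have hlog2 := Real.log_pos one_lt_two
  refine (((hA.sub (hasDerivAt_logb_one_add_mul 2 hbt.ne')).const_mul (w1 / 2)).sub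
    (hA.const_mul (w0 / 2))).congr_deriv ?_
  field_simp
  ring

lemma confidentialPower_pos {a b w0 w1 : ℝ} (hb : 0 < b) (hba : b < a) (hw0 : 0 < w0)
    (hcase : w0 * a < w1 * (a - b)) :
    0 < w1 / w0 * (1 / b - 1 / a) - 1 / b := by
  have ha : 0 < a := hb.trans hba
  have hζ : w1 / w0 * (1 / b - 1 / a) - 1 / b = (w1 * (a - b) - w0 * a) / (w0 * a * b) := by
    field_simp
  rw [hζ]
  exact div_pos (by linarith) (by positivity)

lemma L1_eq_totalPowerUtility_add_confidentialGain {a b w0 w1 lam p0 p1 : ℝ} (ha : 0 ≤ a)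
    (hb : 0 ≤ b) (hp0 : 0 ≤ p0) (hp1 : 0 ≤ p1) :
    w0 / 2 * logb 2 ((1 + a * (p0 + p1)) / (1 + a * p1)) +
        w1 / 2 * logb 2 ((1 + a * p1) / (1 + b * p1)) - lam * (p0 + p1) =
      totalPowerUtility a w0 lam (p0 + p1) + confidentialGain a b w0 w1 p1 := by
  have h01 : 0 < 1 + a * (p0 + p1) := by positivity
  have ha1 : 0 < 1 + a * p1 := by positivity
  have hb1 : 0 < 1 + b * p1 := by positivity
  rw [totalPowerUtility, confidentialGain, logb_div h01.ne' ha1.ne', logb_div ha1.ne' hb1.ne']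
  ring

theorem L1_max_at_split_general (a b w0 w1 lam : ℝ) (hb : 0 < b) (hba : b < a)
    (hw0 : 0 < w0) (hlam : 0 < lam)
    (hcase : w0 * a < w1 * (a - b)) :
    let δ : ℝ := 1 / b - 1 / a
    let γ : ℝ := w0 / (2 * lam * Real.log 2) - 1 / a
    let ζ : ℝ := (w1 / w0) * δ - 1 / b
    let L1 : ℝ → ℝ → ℝ := fun p0 p1 =>
      (w0 / 2) * Real.logb 2 ((1 + a * (p0 + p1)) / (1 + a * p1)) +
      (w1 / 2) * Real.logb 2 ((1 + a * p1) / (1 + b * p1)) - lam * (p0 + p1)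
    ζ ≤ γ → ∀ p0 p1 : ℝ, 0 ≤ p0 → 0 ≤ p1 → L1 p0 p1 ≤ L1 (γ - ζ) ζ := by
  intro δ γ ζ L1 hζγ p0 p1 hp0 hp1
  have ha : 0 < a := hb.trans hba
  have hζ : 0 < ζ := confidentialPower_pos hb hba hw0 hcase
  have hsplit (q0 q1 : ℝ) (hq0 : 0 ≤ q0) (hq1 : 0 ≤ q1) :
      L1 q0 q1 = totalPowerUtility a w0 lam (q0 + q1) + confidentialGain a b w0 w1 q1 :=
    L1_eq_totalPowerUtility_add_confidentialGain ha.le hb.le hq0 hq1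
  calc L1 p0 p1
      = totalPowerUtility a w0 lam (p0 + p1) + confidentialGain a b w0 w1 p1 :=
        hsplit p0 p1 hp0 hp1
    _ ≤ totalPowerUtility a w0 lam γ + confidentialGain a b w0 w1 ζ :=
        add_le_add (isMaxOn_totalPowerUtility ha hlam (hζ.le.trans hζγ) (add_nonneg hp0 hp1))
          (isMaxOn_confidentialGain hb hba hw0 hζ.le hp1)
    _ = L1 (γ - ζ) ζ := by rw [hsplit _ _ (sub_nonneg.mpr hζγ) hζ.le, sub_add_cancel]

/-- When `γ ≥ ζ`, allocating power `ζ` to the confidential message and `γ − ζ`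
to the common message is optimal for the per-sub-channel Lagrangian `L1`. -/
theorem L1_max_at_split (a b w0 w1 lam : ℝ) (hb : 0 < b) (hba : b < a)
    (hw0 : 0 < w0) (hw1 : 0 < w1) (hlam : 0 < lam)
    (hcase : w0 * a < w1 * (a - b)) :
    let δ : ℝ := 1 / b - 1 / a
    let γ : ℝ := w0 / (2 * lam * Real.log 2) - 1 / a
    let ζ : ℝ := (w1 / w0) * δ - 1 / b
    let L1 : ℝ → ℝ → ℝ := fun p0 p1 =>
      (w0 / 2) * Real.logb 2 ((1 + a * (p0 + p1)) / (1 + a * p1)) +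
      (w1 / 2) * Real.logb 2 ((1 + a * p1) / (1 + b * p1)) - lam * (p0 + p1)
    ζ ≤ γ → ∀ p0 p1 : ℝ, 0 ≤ p0 → 0 ≤ p1 → L1 p0 p1 ≤ L1 (γ - ζ) ζ :=
  L1_max_at_split_general a b w0 w1 lam hb hba hw0 hlam hcase
end

section
/- Fix reals a > b > 0, w0 > 0, w1 > 0 and λ > 0 such that w1·(a − b) ≤ w0·a, and set γ = w0/(2·λ·ln 2) − 1/a. For p0, p1 ≥ 0 define L1(p0, p1) = (w0/2)·log2((1 + a·(p0 + p1))/(1 + a·p1)) + (w1/2)·log2((1 + a·p1)/(1 + b·p1)) − λ·(p0 + p1). Then L1(p0, p1) ≤ L1(max(γ, 0), 0) for all p0, p1 ≥ 0; i.e., allocating no power to the confidential message and power [γ]⁺ to the common message is optimal. -/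
/-!
Measured in nats and scaled by `2 log 2`, the Lagrangian is
`w0 (log(1 + aP) - log(1 + a p1)) + w1 (log(1 + a p1) - log(1 + b p1)) - c P` with `P = p0 + p1`
and `c = 2 λ log 2`. Bernoulli's inequality `1 + a t ≤ (1 + b t) ^ (a / b)` gives
`b log(1 + a t) ≤ a log(1 + b t)`, so the secrecy term is at most `w1 (1 - b/a) log(1 + a p1)`,
which the case hypothesis bounds by `w0 log(1 + a p1)`. What remains, `w0 log(1 + aP) - c P`, is a
concave function of the total power alone, maximised on `P ≥ 0` at the water level `[γ]⁺`: its
tangent there has slope exactly `c` when `γ ≥ 0`, and slope `w0 a ≤ c` at `0` otherwise.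
-/

open Real

theorem mul_log_one_add_mul_le_mul_log_one_add_mul {a b t : ℝ} (hb : 0 ≤ b) (hba : b ≤ a)
    (ht : 0 ≤ t) : b * log (1 + a * t) ≤ a * log (1 + b * t) := by
  rcases hb.eq_or_lt with rfl | hb
  · simp
  have bernoulli : 1 + a / b * (b * t) ≤ (1 + b * t) ^ (a / b) :=
    one_add_mul_self_le_rpow_one_add (by nlinarith) ((one_le_div hb).mpr hba)
  rw [← mul_assoc, div_mul_cancel₀ a hb.ne'] at bernoulli
  calc b * log (1 + a * t) ≤ b * log ((1 + b * t) ^ (a / b)) := by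
        have ha : 0 < a := hb.trans_le hba
        gcongr
    _ = a * log (1 + b * t) := by
        rw [log_rpow (by positivity), ← mul_assoc, mul_div_cancel₀ _ hb.ne']

theorem log_sub_log_le_div {x y : ℝ} (hx : 0 < x) (hy : 0 < y) :
    log y - log x ≤ (y - x) / x := by
  have h := log_le_sub_one_of_pos (div_pos hy hx)
  rwa [log_div hy.ne' hx.ne', div_sub_one hx.ne'] at h

theorem mul_log_sub_log_le_of_mul_sub_le {a b w₀ w₁ t : ℝ} (hb : 0 ≤ b) (hba : b ≤ a)
    (hw₁ : 0 ≤ w₁) (hw : w₁ * (a - b) ≤ w₀ * a) (ht : 0 ≤ t) :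
    w₁ * (log (1 + a * t) - log (1 + b * t)) ≤ w₀ * log (1 + a * t) := by
  rcases (hb.trans hba).eq_or_lt with rfl | ha
  · obtain rfl : b = 0 := le_antisymm hba hb
    simp
  have hlog : 0 ≤ log (1 + a * t) := log_nonneg (by nlinarith)
  have h := mul_log_one_add_mul_le_mul_log_one_add_mul hb hba ht
  refine le_of_mul_le_mul_left ?_ ha
  nlinarith [mul_le_mul_of_nonneg_right hw hlog, mul_le_mul_of_nonneg_left h hw₁]

theorem waterfilling_le {a c w P : ℝ} (ha : 0 < a) (hc : 0 < c) (hw : 0 ≤ w) (hP : 0 ≤ P) :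
    w * log (1 + a * P) - c * P ≤
      w * log (1 + a * max (w / c - 1 / a) 0) - c * max (w / c - 1 / a) 0 := by
  set Q := max (w / c - 1 / a) 0 with hQ
  have hQ₀ : 0 < 1 + a * Q := by positivity
  have slope : w * a / (1 + a * Q) * (P - Q) ≤ c * (P - Q) := by
    rcases le_total 0 (w / c - 1 / a) with hγ | hγ
    · have : w * a / (1 + a * Q) = c := by
        rw [div_eq_iff hQ₀.ne', hQ, max_eq_left hγ]; field_simp; ring
      rw [this]
    · have : w * a ≤ c := by
        rw [sub_nonpos, div_le_div_iff₀ hc ha] at hγ; linarith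
      rw [hQ, max_eq_right hγ]
      simpa using mul_le_mul_of_nonneg_right this hP
  have tangent := log_sub_log_le_div hQ₀ (by positivity : 0 < 1 + a * P)
  calc w * log (1 + a * P) - c * P
      = w * (log (1 + a * P) - log (1 + a * Q)) + w * log (1 + a * Q) - c * P := by ring
    _ ≤ w * ((1 + a * P - (1 + a * Q)) / (1 + a * Q)) + w * log (1 + a * Q) - c * P := by
        gcongr
    _ = w * a / (1 + a * Q) * (P - Q) + w * log (1 + a * Q) - c * P := by ring
    _ ≤ c * (P - Q) + w * log (1 + a * Q) - c * P := by gcongr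
    _ = w * log (1 + a * Q) - c * Q := by ring

/-- When `w1·(a − b) ≤ w0·a`, allocating no power to the confidential message
and power `[γ]⁺` to the common message is optimal for the per-sub-channel
Lagrangian `L1`. -/
theorem L1_max_no_confidential (a b w0 w1 lam : ℝ) (hb : 0 < b) (hba : b < a)
    (hw0 : 0 < w0) (hw1 : 0 < w1) (hlam : 0 < lam)
    (hcase : w1 * (a - b) ≤ w0 * a) :
    let γ : ℝ := w0 / (2 * lam * Real.log 2) - 1 / a
    let L1 : ℝ → ℝ → ℝ := fun p0 p1 =>
      (w0 / 2) * Real.logb 2 ((1 + a * (p0 + p1)) / (1 + a * p1)) +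
      (w1 / 2) * Real.logb 2 ((1 + a * p1) / (1 + b * p1)) - lam * (p0 + p1)
    ∀ p0 p1 : ℝ, 0 ≤ p0 → 0 ≤ p1 → L1 p0 p1 ≤ L1 (max γ 0) 0 := by
  intro γ L1 p0 p1 hp0 hp1
  have ha : 0 < a := hb.trans hba
  have hln2 : 0 < log 2 := log_pos one_lt_two
  set c := 2 * lam * log 2
  set Q := max γ 0
  calc L1 p0 p1 = (w0 * (log (1 + a * (p0 + p1)) - log (1 + a * p1)) +
        w1 * (log (1 + a * p1) - log (1 + b * p1)) - c * (p0 + p1)) / (2 * log 2) := by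
        have h₁ : 1 + a * (p0 + p1) ≠ 0 := by positivity
        have h₂ : 1 + a * p1 ≠ 0 := by positivity
        have h₃ : 1 + b * p1 ≠ 0 := by positivity
        simp only [L1, logb, log_div h₁ h₂, log_div h₂ h₃, c]
        field_simp
    _ ≤ (w0 * log (1 + a * (p0 + p1)) - c * (p0 + p1)) / (2 * log 2) := by
        gcongr
        linarith [mul_log_sub_log_le_of_mul_sub_le hb.le hba.le hw1.le hcase hp1]
    _ ≤ (w0 * log (1 + a * Q) - c * Q) / (2 * log 2) :=
        div_le_div_of_nonneg_right (waterfilling_le ha (by positivity) hw0.le (by positivity))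
          (by positivity)
    _ = L1 Q 0 := by
        simp only [L1, logb, c, mul_zero, add_zero, div_one, log_one, zero_div]
        field_simp
end

section
/- Fix reals e > 0, c > d > 0, w0 > 0, w2 > 0 and λ > 0. Define u0(x) = (w0/(2·ln 2)) · e/(1 + e·x) − λ and u2(x) = (w2/(2·ln 2)) · (c/(1 + c·x) − d/(1 + d·x)) − λ. Set δ' = 1/d − 1/c, r = w2/w0, Δ = (1 + r²)·δ'² + 2·r·δ'·(2/e − 1/c − 1/d), and assume Δ ≥ 0; set θ = (r·δ' − 1/c − 1/d + √Δ)/2 and assume θ ≥ 0. Then u0(θ) = u2(θ), and u0(x) > u2(x) for every x > θ. -/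
/-- `θ` is the largest intersection point of the marginal utilities `u0`
(common message, weaker user's gain `e`) and `u2` (second confidential
message): `u0 θ = u2 θ` and `u0 x > u2 x` for `x > θ`. -/
theorem theta_intersection (e c d w0 w2 lam : ℝ) (he : 0 < e) (hd : 0 < d)
    (hdc : d < c) (hw0 : 0 < w0) (hw2 : 0 < w2) (hlam : 0 < lam) :
    let u0 : ℝ → ℝ := fun x => w0 / (2 * Real.log 2) * (e / (1 + e * x)) - lam
    let u2 : ℝ → ℝ := fun x =>
      w2 / (2 * Real.log 2) * (c / (1 + c * x) - d / (1 + d * x)) - lam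
    let δ' : ℝ := 1 / d - 1 / c
    let r : ℝ := w2 / w0
    let Δ : ℝ := (1 + r ^ 2) * δ' ^ 2 + 2 * r * δ' * (2 / e - 1 / c - 1 / d)
    let θ : ℝ := (r * δ' - 1 / c - 1 / d + Real.sqrt Δ) / 2
    0 ≤ Δ → 0 ≤ θ → (u0 θ = u2 θ ∧ ∀ x : ℝ, θ < x → u2 x < u0 x) := by
  intro u0 u2 δ' r Δ θ hΔ hθ
  have hc : 0 < c := hd.trans hdc
  have hlog : 0 < Real.log 2 := Real.log_pos (by norm_num)
  have hs0 : 0 ≤ Real.sqrt Δ := Real.sqrt_nonneg _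
  have hs2 : Real.sqrt Δ ^ 2 = Δ := Real.sq_sqrt hΔ
  set s := Real.sqrt Δ with hs
  set b : ℝ := 1 / c + 1 / d - r * δ' with hb
  set C : ℝ := 1 / (c * d) - r * δ' / e with hC
  have hΔbc : Δ = b ^ 2 - 4 * C := by
    simp only [hb, hC]
    unfold Δ r δ'
    field_simp
    ring
  have hθeq : θ = (-b + s) / 2 := by
    unfold θ
    rw [hb]; ring
  have key : ∀ x : ℝ, 0 ≤ x → u0 x - u2 x =
      w0 * e * c * d / (2 * Real.log 2) *
        ((x ^ 2 + b * x + C) / ((1 + e * x) * ((1 + c * x) * (1 + d * x)))) := by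
    intro x hx
    have h1 : (0:ℝ) < 1 + e * x := by positivity
    have h2 : (0:ℝ) < 1 + c * x := by positivity
    have h3 : (0:ℝ) < 1 + d * x := by positivity
    unfold u0 u2
    rw [hb, hC]
    unfold r δ'
    field_simp
    ring
  have hQθ : θ ^ 2 + b * θ + C = 0 := by
    rw [hθeq]; linear_combination hs2/4 + hΔbc/4
  constructor
  · have := key θ hθ
    rw [hQθ] at this
    simp at this
    linarith [this]
  · intro x hx
    have hx0 : 0 ≤ x := le_trans hθ hx.le
    have hQx : 0 < x ^ 2 + b * x + C := by
      have h2 : x ^ 2 + b * x + C = (x - θ) * (x - θ + s) := by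
        rw [hθeq]; linear_combination hs2/4 + hΔbc/4
      rw [h2]
      have : 0 < x - θ := by linarith
      nlinarith
    have h1 : (0:ℝ) < 1 + e * x := by positivity
    have h2 : (0:ℝ) < 1 + c * x := by positivity
    have h3 : (0:ℝ) < 1 + d * x := by positivity
    have hpos : 0 < u0 x - u2 x := by
      rw [key x hx0]; positivity
    linarith
end
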